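/- Let 𝒜 = 𝒜^k_ℓ(r) with r ≥ 2, ℓ ≥ 3, 1 ≤ k ≤ ℓ − 1, and H = ker(x_i) a coordinate hyperplane (1 ≤ i ≤ k). Then the restriction 𝒜^H is linearly isomorphic to 𝒜^{ℓ−1}_{ℓ−1}(r), the full monomial arrangement of G(r,1,ℓ−1). -/
import Mathlib


open Classical MvPolynomial Module
open scoped Classical

noncomputable section

namespace Arrangement

variable (K : Type) [Field K]

/-- Index type for the polynomial ring `S = Sym(V*)`, realized as a polynomial
ring in coordinates coming from a chosen basis of `V`. -/
abbrev bIdx (V : Type) [AddCommGroup V] [Module K V] : Type := Basis.ofVectorSpaceIndex K V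

/-- The coordinate ring `S = Sym(V*)` realized as a multivariate polynomial ring. -/
abbrev Poly (V : Type) [AddCommGroup V] [Module K V] : Type := MvPolynomial (bIdx K V) K

/-- Derivations of `S`, written in coordinates: a derivation is determined by its
values on the variables. -/
abbrev Der (V : Type) [AddCommGroup V] [Module K V] : Type := bIdx K V → Poly K V

variable {V : Type} [AddCommGroup V] [Module K V] [FiniteDimensional K V]

/-- The degree one polynomial attached to a linear form on `V`. -/
def toPoly (f : Module.Dual K V) : Poly K V :=
  ∑ i : bIdx K V, MvPolynomial.C (f (Basis.ofVectorSpace K V i)) * MvPolynomial.X i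

/-- Apply the derivation `θ` to a polynomial. -/
def applyDer (θ : Der K V) (p : Poly K V) : Poly K V :=
  ∑ i : bIdx K V, θ i * MvPolynomial.pderiv i p

/-- A choice of defining linear form for a hyperplane `H` (any linear form with
kernel `H`; for submodules that are not hyperplanes this is junk). -/
def formOf (H : Submodule K V) : Module.Dual K V :=
  if h : ∃ f : Module.Dual K V, LinearMap.ker f = H then h.choose else 0

/-- The defining linear polynomial `α_H` of a hyperplane. -/
def polyOf (H : Submodule K V) : Poly K V := toPoly K (formOf K H)

/-- The module `D(𝒜, μ)` of derivations of the multiarrangement `(𝒜, μ)`. -/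
def derMod (A : Finset (Submodule K V)) (μ : Submodule K V → ℕ) :
    Submodule (Poly K V) (Der K V) where
  carrier := {θ | ∀ H ∈ A, (polyOf K H) ^ (μ H) ∣ applyDer K θ (polyOf K H)}
  zero_mem' := by intro H hH; simp [applyDer]
  add_mem' := by
    intro a b ha hb H hH
    have h : applyDer K (a + b) (polyOf K H)
        = applyDer K a (polyOf K H) + applyDer K b (polyOf K H) := by
      simp [applyDer, add_mul, Finset.sum_add_distrib]
    rw [h]; exact dvd_add (ha H hH) (hb H hH)
  smul_mem' := by
    intro c a ha H hH
    have h : applyDer K (c • a) (polyOf K H) = c * applyDer K a (polyOf K H) := by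
      simp [applyDer, Finset.mul_sum, mul_assoc]
    rw [h]; exact Dvd.dvd.mul_left (ha H hH) c

/-- `θ` is homogeneous of polynomial degree `p` (in coordinates: all components
are homogeneous polynomials of degree `p`). -/
def IsHomogDer (θ : Der K V) (p : ℕ) : Prop := ∀ i, (θ i).IsHomogeneous p

/-- The multiarrangement `(𝒜, μ)` is free with exponents `E` : `D(𝒜,μ)` admits a
homogeneous basis whose multiset of polynomial degrees is `E`. -/
def FreeExp (A : Finset (Submodule K V)) (μ : Submodule K V → ℕ) (E : Multiset ℕ) : Prop :=
  ∃ (b : Basis (Fin (Module.finrank K V)) (Poly K V) (derMod K A μ))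
    (d : Fin (Module.finrank K V) → ℕ),
      (∀ j, IsHomogDer K (b j : Der K V) (d j)) ∧ E = Multiset.map d Finset.univ.val

/-- The multiarrangement `(𝒜, μ)` is free. -/
def IsFree (A : Finset (Submodule K V)) (μ : Submodule K V → ℕ) : Prop :=
  ∃ E, FreeExp K A μ E

/-- The constant multiplicity `1` (simple arrangement). -/
def one : Submodule K V → ℕ := fun _ => 1

/-- The localization `𝒜_X` of `𝒜` at `X`. -/
def loc (A : Finset (Submodule K V)) (X : Submodule K V) : Finset (Submodule K V) :=
  A.filter fun H => X ≤ H

/-- The restriction `𝒜^{H₀}` of `𝒜` to `H₀`, as an arrangement in `H₀`. -/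
def restr (A : Finset (Submodule K V)) (H₀ : Submodule K V) : Finset (Submodule K ↥H₀) :=
  (A.erase H₀).image fun H => H.comap H₀.subtype

/-- Ziegler's canonical multiplicity `κ` on the restriction `𝒜^{H₀}`:
`κ(Y) = |𝒜_Y| - 1`. -/
def ziegler (A : Finset (Submodule K V)) (H₀ : Submodule K V) : Submodule K ↥H₀ → ℕ :=
  fun Y => (loc K A (Y.map H₀.subtype)).card - 1

/-- The order `|μ|` of a multiarrangement. -/
def msize (A : Finset (Submodule K V)) (μ : Submodule K V → ℕ) : ℕ := ∑ H ∈ A, μ H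

/-- The rank of an arrangement: the codimension of the intersection of all its
hyperplanes. -/
def arrRank (A : Finset (Submodule K V)) : ℕ :=
  Module.finrank K V - Module.finrank K ↥(A.inf id)

/-- The multiplicity `δ_{H₀, m₀}` concentrated at `H₀`. -/
def concMult (H₀ : Submodule K V) (m₀ : ℕ) : Submodule K V → ℕ :=
  fun H => if H = H₀ then m₀ else 1

/-- The underlying arrangement of the deletion `(𝒜', μ')` w.r.t. `H₀`. -/
def delArr (A : Finset (Submodule K V)) (μ : Submodule K V → ℕ) (H₀ : Submodule K V) :
    Finset (Submodule K V) :=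
  if μ H₀ = 1 then A.erase H₀ else A

/-- The multiplicity of the deletion `(𝒜', μ')` w.r.t. `H₀`. -/
def delMult (μ : Submodule K V → ℕ) (H₀ : Submodule K V) : Submodule K V → ℕ :=
  fun H => if H = H₀ then μ H₀ - 1 else μ H

/-- `θ ∈ α · Der(S)`: every component of `θ` is divisible by `α`. -/
def divDer (α : Poly K V) (θ : Der K V) : Prop := ∀ i, α ∣ θ i

/-- The Euler multiplicity `μ*` on the restriction `𝒜^{H₀}`: for `Y ∈ 𝒜^{H₀}`,
`μ*(Y)` is the polynomial degree of the distinguished basis element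
`θ_Y ∉ α₀·Der(S)` in a homogeneous basis `{θ_Y, ψ_Y, D₃, …, D_ℓ}` of
`D(𝒜_Y, μ_Y)` with `ψ_Y ∈ α₀·Der(S)` and `D₃, …, D_ℓ` of degree `0`. -/
def eulerMult (A : Finset (Submodule K V)) (μ : Submodule K V → ℕ) (H₀ : Submodule K V) :
    Submodule K ↥H₀ → ℕ := fun Y =>
  sInf {p : ℕ |
    ∃ (b : Basis (Fin (Module.finrank K V)) (Poly K V)
          (derMod K (loc K A (Y.map H₀.subtype)) μ))
      (d : Fin (Module.finrank K V) → ℕ) (j₀ j₁ : Fin (Module.finrank K V)),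
        j₀ ≠ j₁ ∧ (∀ j, IsHomogDer K (b j : Der K V) (d j)) ∧
        ¬ divDer K (polyOf K H₀) (b j₀) ∧ divDer K (polyOf K H₀) (b j₁) ∧
        (∀ j, j ≠ j₀ → j ≠ j₁ → d j = 0) ∧ d j₀ = p}

/-- Inductively free (simple) arrangements. -/
inductive IndFree :
    ∀ (V : Type) [AddCommGroup V] [Module K V] [FiniteDimensional K V],
      Finset (Submodule K V) → Prop
  | empty (V : Type) [AddCommGroup V] [Module K V] [FiniteDimensional K V] :
      IndFree V (∅ : Finset (Submodule K V))
  | step (V : Type) [AddCommGroup V] [Module K V] [FiniteDimensional K V]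
      (A : Finset (Submodule K V)) (H₀ : Submodule K V) (hH₀ : H₀ ∈ A)
      (E' E'' : Multiset ℕ)
      (hfree' : FreeExp K (A.erase H₀) (one K) E')
      (hfree'' : FreeExp K (restr K A H₀) (one K) E'')
      (hle : E'' ≤ E')
      (ih' : IndFree V (A.erase H₀))
      (ih'' : IndFree ↥H₀ (restr K A H₀)) :
      IndFree V A

/-- Inductively free multiarrangements. -/
inductive MIndFree :
    ∀ (V : Type) [AddCommGroup V] [Module K V] [FiniteDimensional K V],
      Finset (Submodule K V) → (Submodule K V → ℕ) → Prop
  | empty (V : Type) [AddCommGroup V] [Module K V] [FiniteDimensional K V]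
      (μ : Submodule K V → ℕ) :
      MIndFree V (∅ : Finset (Submodule K V)) μ
  | step (V : Type) [AddCommGroup V] [Module K V] [FiniteDimensional K V]
      (A : Finset (Submodule K V)) (μ : Submodule K V → ℕ)
      (H₀ : Submodule K V) (hH₀ : H₀ ∈ A) (hμ : 1 ≤ μ H₀)
      (E' E'' : Multiset ℕ)
      (hfree' : FreeExp K (delArr K A μ H₀) (delMult K μ H₀) E')
      (hfree'' : FreeExp K (restr K A H₀) (eulerMult K A μ H₀) E'')
      (hle : E'' ≤ E')
      (ih' : MIndFree V (delArr K A μ H₀) (delMult K μ H₀))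
      (ih'' : MIndFree ↥H₀ (restr K A H₀) (eulerMult K A μ H₀)) :
      MIndFree V A μ

/-- Linear isomorphism of arrangements. -/
def ArrIso {V₁ V₂ : Type} [AddCommGroup V₁] [Module K V₁] [AddCommGroup V₂] [Module K V₂]
    (A₁ : Finset (Submodule K V₁)) (A₂ : Finset (Submodule K V₂)) : Prop :=
  ∃ e : V₁ ≃ₗ[K] V₂, A₂ = A₁.image (Submodule.map (e : V₁ →ₗ[K] V₂))

end Arrangement

namespace Arrangement

/-- A primitive `r`-th root of unity. -/
def zeta (r : ℕ) : ℂ := Complex.exp (2 * Real.pi * Complex.I / r)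

/-- The linear form `x_i - ζ^n x_j` on `ℂ^ℓ`. -/
def formIJ (ℓ : ℕ) (i j : Fin ℓ) (r n : ℕ) : Module.Dual ℂ (Fin ℓ → ℂ) :=
  LinearMap.proj i - (zeta r) ^ n • LinearMap.proj j

/-- The coordinate linear form `x_i` on `ℂ^ℓ`. -/
def coordForm (ℓ : ℕ) (i : Fin ℓ) : Module.Dual ℂ (Fin ℓ → ℂ) :=
  LinearMap.proj i

/-- The intermediate arrangement `𝒜^k_ℓ(r)` of Orlik–Solomon, with defining
polynomial `x₁ ⋯ x_k ∏_{i<j, 0 ≤ n < r} (x_i - ζ^n x_j)`. -/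
def interArr (r ℓ k : ℕ) : Finset (Submodule ℂ (Fin ℓ → ℂ)) :=
  ((Finset.univ : Finset (Fin ℓ)).filter fun i : Fin ℓ => (i : ℕ) < k).image
      (fun i => LinearMap.ker (coordForm ℓ i)) ∪
  ((Finset.univ : Finset (Fin ℓ × Fin ℓ × Fin r)).filter fun t => t.1 < t.2.1).image
      (fun t => LinearMap.ker (formIJ ℓ t.1 t.2.1 r (t.2.2 : ℕ)))

end Arrangement

namespace Arrangement


lemma zeta_ne_zero (r : ℕ) : zeta r ≠ 0 := Complex.exp_ne_zero _

/-- Deleting the `i`-th coordinate: a linear isomorphism from `ker (x_i)` to `ℂ^m`. -/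
def delCoord (m : ℕ) (i : Fin (m + 1)) :
    ↥(LinearMap.ker (coordForm (m + 1) i)) ≃ₗ[ℂ] (Fin m → ℂ) where
  toFun x := fun j => (x : Fin (m + 1) → ℂ) (i.succAbove j)
  map_add' x y := rfl
  map_smul' c x := rfl
  invFun y := ⟨i.insertNth 0 y, by simp [coordForm, LinearMap.mem_ker]⟩
  left_inv x := by
    apply Subtype.ext
    have hx : (x : Fin (m + 1) → ℂ) i = 0 := x.2
    show i.insertNth 0 (fun j => (x : Fin (m + 1) → ℂ) (i.succAbove j))
      = (x : Fin (m + 1) → ℂ)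
    conv_rhs => rw [← Fin.insertNth_self_removeNth i (x : Fin (m + 1) → ℂ)]
    rw [hx]
    rfl
  right_inv y := by
    ext j
    simp [Fin.insertNth_apply_succAbove]

lemma map_restr_ker (m : ℕ) (i : Fin (m + 1)) (f : Module.Dual ℂ (Fin (m + 1) → ℂ))
    (g : Module.Dual ℂ (Fin m → ℂ))
    (h : ∀ y : Fin m → ℂ, f (i.insertNth 0 y) = 0 ↔ g y = 0) :
    Submodule.map ((delCoord m i : ↥(LinearMap.ker (coordForm (m + 1) i)) ≃ₗ[ℂ] (Fin m → ℂ)) :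
        ↥(LinearMap.ker (coordForm (m + 1) i)) →ₗ[ℂ] (Fin m → ℂ))
      (Submodule.comap (LinearMap.ker (coordForm (m + 1) i)).subtype (LinearMap.ker f))
      = LinearMap.ker g := by
  ext y
  rw [Submodule.mem_map_equiv]
  simp only [Submodule.mem_comap, LinearMap.mem_ker]
  show f (i.insertNth 0 y) = 0 ↔ g y = 0
  exact h y

lemma mem_interArr {r ℓ k : ℕ} {X : Submodule ℂ (Fin ℓ → ℂ)} :
    X ∈ interArr r ℓ k ↔
      (∃ j : Fin ℓ, (j : ℕ) < k ∧ X = LinearMap.ker (coordForm ℓ j)) ∨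
      (∃ a b : Fin ℓ, ∃ n : Fin r, a < b ∧ X = LinearMap.ker (formIJ ℓ a b r (n : ℕ))) := by
  simp only [interArr, Finset.mem_union, Finset.mem_image, Finset.mem_filter,
    Finset.mem_univ, true_and, Prod.exists]
  constructor
  · rintro (⟨j, hj, rfl⟩ | ⟨a, b, n, hab, rfl⟩)
    · exact Or.inl ⟨j, hj, rfl⟩
    · exact Or.inr ⟨a, b, n, hab, rfl⟩
  · rintro (⟨j, hj, rfl⟩ | ⟨a, b, n, hab, rfl⟩)
    · exact Or.inl ⟨j, hj, rfl⟩
    · exact Or.inr ⟨a, b, n, hab, rfl⟩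

/-- Restricting `𝒜^k_ℓ(r)` to a coordinate hyperplane `H = ker(x_i)` with
`i ≤ k` yields an arrangement linearly isomorphic to the full monomial arrangement
`𝒜^{ℓ-1}_{ℓ-1}(r)` of `G(r, 1, ℓ-1)`. -/
theorem interArr_restr_coord (r ℓ k : ℕ) (hr : 2 ≤ r) (hl : 3 ≤ ℓ)
    (hk1 : 1 ≤ k) (hk : k ≤ ℓ - 1)
    (i : Fin ℓ) (hi : (i : ℕ) < k) :
    ArrIso ℂ
      (restr ℂ (interArr r ℓ k) (LinearMap.ker (coordForm ℓ i)))
      (interArr r (ℓ - 1) (ℓ - 1)) := by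
  obtain ⟨m, rfl⟩ : ∃ m, ℓ = m + 1 := ⟨ℓ - 1, by omega⟩
  simp only [Nat.add_sub_cancel] at hk ⊢
  have hr0 : 0 < r := by omega
  refine ⟨delCoord m i, ?_⟩
  unfold restr
  rw [Finset.image_image]
  ext X
  rw [mem_interArr]
  simp only [Finset.mem_image, Finset.mem_erase, Function.comp]
  constructor
  · rintro (⟨j', _, rfl⟩ | ⟨a', b', n, hab, rfl⟩)
    · -- coordinate hyperplane in the restriction, coming from `x_a - x_b` with `i ∈ {a,b}`
      set j : Fin (m + 1) := i.succAbove j' with hj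
      rcases (Fin.succAbove_ne i j').lt_or_gt with hlt | hlt
      · refine ⟨LinearMap.ker (formIJ (m + 1) j i r 0), ⟨?_, ?_⟩, ?_⟩
        · intro heq
          have h1 : (fun _ => (1 : ℂ)) ∈ LinearMap.ker (formIJ (m + 1) j i r 0) := by
            simp [formIJ, LinearMap.mem_ker]
          rw [heq] at h1
          simp [coordForm, LinearMap.mem_ker] at h1
        · rw [mem_interArr]
          exact Or.inr ⟨j, i, ⟨0, hr0⟩, hlt, rfl⟩
        · refine map_restr_ker m i _ _ ?_
          intro y
          simp [formIJ, coordForm, Fin.insertNth_apply_same,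
            Fin.insertNth_apply_succAbove, hj]
      · refine ⟨LinearMap.ker (formIJ (m + 1) i j r 0), ⟨?_, ?_⟩, ?_⟩
        · intro heq
          have h1 : (fun _ => (1 : ℂ)) ∈ LinearMap.ker (formIJ (m + 1) i j r 0) := by
            simp [formIJ, LinearMap.mem_ker]
          rw [heq] at h1
          simp [coordForm, LinearMap.mem_ker] at h1
        · rw [mem_interArr]
          exact Or.inr ⟨i, j, ⟨0, hr0⟩, hlt, rfl⟩
        · refine map_restr_ker m i _ _ ?_
          intro y
          simp [formIJ, coordForm, Fin.insertNth_apply_same,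
            Fin.insertNth_apply_succAbove, hj, neg_eq_zero]
    · -- generic hyperplane
      refine ⟨LinearMap.ker (formIJ (m + 1) (i.succAbove a') (i.succAbove b') r (n : ℕ)),
        ⟨?_, ?_⟩, ?_⟩
      · intro heq
        have h1 : (Pi.single i 1 : Fin (m + 1) → ℂ) ∈
            LinearMap.ker (formIJ (m + 1) (i.succAbove a') (i.succAbove b') r (n : ℕ)) := by
          simp [formIJ, LinearMap.mem_ker,
            Pi.single_eq_of_ne (Fin.succAbove_ne i a'),
            Pi.single_eq_of_ne (Fin.succAbove_ne i b')]
        rw [heq] at h1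
        simp [coordForm, LinearMap.mem_ker] at h1
      · rw [mem_interArr]
        exact Or.inr ⟨i.succAbove a', i.succAbove b', n,
          Fin.succAbove_lt_succAbove_iff.mpr hab, rfl⟩
      · refine map_restr_ker m i _ _ ?_
        intro y
        simp [formIJ, Fin.insertNth_apply_succAbove]
  · rintro ⟨H', ⟨hne, hmem⟩, rfl⟩
    rw [mem_interArr] at hmem
    rcases hmem with ⟨j, hjk, rfl⟩ | ⟨a, b, n, hab, rfl⟩
    · -- coordinate hyperplane `x_j`, necessarily `j ≠ i`
      have hji : j ≠ i := by rintro rfl; exact hne rfl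
      obtain ⟨j', rfl⟩ := Fin.exists_succAbove_eq hji
      refine Or.inl ⟨j', j'.isLt, ?_⟩
      refine map_restr_ker m i _ _ ?_
      intro y
      simp [coordForm, Fin.insertNth_apply_succAbove]
    · rcases eq_or_ne i a with rfl | hai
      · -- `x_i - ζ^n x_b` restricts to a coordinate hyperplane
        obtain ⟨b', rfl⟩ := Fin.exists_succAbove_eq hab.ne'
        refine Or.inl ⟨b', b'.isLt, ?_⟩
        refine map_restr_ker m i _ _ ?_
        intro y
        simp [formIJ, coordForm, Fin.insertNth_apply_same,
          Fin.insertNth_apply_succAbove, neg_eq_zero, pow_ne_zero _ (zeta_ne_zero r)]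
      · rcases eq_or_ne i b with rfl | hbi
        · obtain ⟨a', rfl⟩ := Fin.exists_succAbove_eq hab.ne
          refine Or.inl ⟨a', a'.isLt, ?_⟩
          refine map_restr_ker m i _ _ ?_
          intro y
          simp [formIJ, coordForm, Fin.insertNth_apply_same,
            Fin.insertNth_apply_succAbove]
        · obtain ⟨a', rfl⟩ := Fin.exists_succAbove_eq hai.symm
          obtain ⟨b', rfl⟩ := Fin.exists_succAbove_eq hbi.symm
          refine Or.inr ⟨a', b', n, Fin.succAbove_lt_succAbove_iff.mp hab, ?_⟩
          refine map_restr_ker m i _ _ ?_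
          intro y
          simp [formIJ, Fin.insertNth_apply_succAbove]


end Arrangement
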